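/- arXiv:1408.0469 — 2 statements merged into one kernel-verified Lean document; each statement's English description precedes it below -/
import Mathlib

section
/- Let n_T ≥ 2 be an integer and B ≥ 0 a real number, and let F be the cumulative distribution function given by F(x) = 1 − 2^B (1 + x)^{−(n_T−1)} for x ≥ 2^{B/(n_T−1)} − 1 and F(x) = 0 otherwise. For each K ≥ 2 let X_1, …, X_K be i.i.d. real random variables with c.d.f. F and M_K = max_{1≤k≤K} X_k. Then there exist constants C > 0 and K_0 such that for all K ≥ K_0, P( (2^B K / log √K)^{1/(n_T−1)} − 1 ≤ M_K ≤ (2^B K log √K)^{1/(n_T−1)} − 1 ) ≥ 1 − C / log K. -/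
open MeasureTheory ProbabilityTheory

/-!
The maximum of `K` independent copies is `≤ x` with probability `F x ^ K`. At the two endpoints
`F` takes the values `1 - 1/(K L)` and `1 - L/K`, where `L = log √K`. Bernoulli's inequality gives
`(1 - 1/(K L))^K ≥ 1 - 1/L = 1 - 2/log K`, and `(1 - L/K)^K ≤ e^{-L} = 1/√K ≤ 2/log K`,
so the maximum lies between the endpoints with probability at least `1 - 4/log K`.
-/

noncomputable def quantCellCDF (nT : ℕ) (B x : ℝ) : ℝ :=
  if (2:ℝ) ^ (B / ((nT : ℝ) - 1)) - 1 ≤ x then 1 - (2:ℝ) ^ B * ((1 + x) ^ (nT - 1))⁻¹ else 0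

lemma quantCellCDF_rpow_sub_one {nT : ℕ} (hnT : 2 ≤ nT) {B y : ℝ} (hy : (2:ℝ) ^ B ≤ y) :
    quantCellCDF nT B (y ^ (1 / ((nT : ℝ) - 1)) - 1) = 1 - (2:ℝ) ^ B / y := by
  have h2B : (0:ℝ) < 2 ^ B := Real.rpow_pos_of_pos two_pos B
  have hn : ((nT - 1 : ℕ) : ℝ) = (nT : ℝ) - 1 := by rw [Nat.cast_sub (by omega), Nat.cast_one]
  have hnpos : (0:ℝ) < (nT : ℝ) - 1 := by rw [← hn]; exact_mod_cast (by omega : 0 < nT - 1)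
  have hthreshold : (2:ℝ) ^ (B / ((nT : ℝ) - 1)) ≤ y ^ (1 / ((nT : ℝ) - 1)) := by
    rw [div_eq_mul_one_div B, Real.rpow_mul zero_le_two]
    exact Real.rpow_le_rpow h2B.le hy (by positivity)
  have hpow : (y ^ (1 / ((nT : ℝ) - 1))) ^ (nT - 1) = y := by
    rw [← Real.rpow_natCast, hn, ← Real.rpow_mul (h2B.le.trans hy),
      one_div_mul_cancel hnpos.ne', Real.rpow_one]
  rw [quantCellCDF, if_pos (by linarith), add_sub_cancel, hpow, div_eq_mul_inv]

lemma quantCellCDF_upper {nT : ℕ} (hnT : 2 ≤ nT) (B : ℝ) {K L : ℝ} (hKL : 1 ≤ K * L) :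
    quantCellCDF nT B ((2 ^ B * K * L) ^ (1 / ((nT : ℝ) - 1)) - 1) = 1 - (K * L)⁻¹ := by
  have h2B : (0:ℝ) < 2 ^ B := Real.rpow_pos_of_pos two_pos B
  rw [quantCellCDF_rpow_sub_one hnT (by rw [mul_assoc]; exact le_mul_of_one_le_right h2B.le hKL)]
  field_simp

lemma quantCellCDF_lower {nT : ℕ} (hnT : 2 ≤ nT) (B : ℝ) {K L : ℝ} (hL : 0 < L) (hLK : L ≤ K) :
    quantCellCDF nT B ((2 ^ B * K / L) ^ (1 / ((nT : ℝ) - 1)) - 1) = 1 - L / K := by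
  have h2B : (0:ℝ) < 2 ^ B := Real.rpow_pos_of_pos two_pos B
  rw [quantCellCDF_rpow_sub_one hnT ((le_div_iff₀ hL).2 (mul_le_mul_of_nonneg_left hLK h2B.le))]
  field_simp

section

variable {Ω ι : Type*} [MeasurableSpace Ω] {μ : Measure Ω}

lemma MeasureTheory.measure_le_sub_measure_le_le (M : Ω → ℝ) (a b : ℝ) :
    μ {ω | M ω ≤ b} - μ {ω | M ω ≤ a} ≤ μ {ω | a ≤ M ω ∧ M ω ≤ b} :=
  le_measure_sdiff.trans <| measure_mono fun _ ⟨hb, ha⟩ => ⟨(not_le.1 ha).le, hb⟩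

lemma ProbabilityTheory.iIndepFun.measure_iSup_le [Fintype ι] [Nonempty ι] {X : ι → Ω → ℝ}
    (hX : iIndepFun X μ) (x : ℝ) : μ {ω | ⨆ i, X i ω ≤ x} = ∏ i, μ {ω | X i ω ≤ x} := by
  have hset : {ω | ⨆ i, X i ω ≤ x} = ⋂ i ∈ Finset.univ, X i ⁻¹' Set.Iic x := by
    ext ω
    simp [ciSup_le_iff (Set.finite_range fun i => X i ω).bddAbove]
  rw [hset, hX.measure_inter_preimage_eq_mul _ fun _ _ => measurableSet_Iic]
  rfl

lemma ProbabilityTheory.iIndepFun.measure_iSup_le_eq_ofReal_pow [IsFiniteMeasure μ] [Fintype ι]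
    [Nonempty ι] {X : ι → Ω → ℝ} (hX : iIndepFun X μ) {G : ℝ → ℝ}
    (hG : ∀ i x, (μ {ω | X i ω ≤ x}).toReal = G x) (x : ℝ) :
    μ {ω | ⨆ i, X i ω ≤ x} = ENNReal.ofReal (G x ^ Fintype.card ι) := by
  have hXi (i : ι) : μ {ω | X i ω ≤ x} = ENNReal.ofReal (G x) := by
    rw [← hG i x, ENNReal.ofReal_toReal (measure_ne_top μ _)]
  have hG0 : 0 ≤ G x := hG (Classical.arbitrary ι) x ▸ ENNReal.toReal_nonneg
  rw [hX.measure_iSup_le, Finset.prod_congr rfl fun i _ => hXi i, Finset.prod_const,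
    Finset.card_univ, ENNReal.ofReal_pow hG0]

end

lemma one_sub_inv_le_one_sub_inv_mul_pow {K : ℕ} {L : ℝ} (hKL : 1 / 2 ≤ K * L) :
    1 - L⁻¹ ≤ (1 - (K * L)⁻¹) ^ K := by
  have hK : (K : ℝ) ≠ 0 := by rintro hK; rw [hK, zero_mul] at hKL; norm_num at hKL
  have hle : -2 ≤ -(K * L)⁻¹ := by
    rw [neg_le_neg_iff]
    calc (K * L)⁻¹ ≤ (1 / 2)⁻¹ := inv_anti₀ one_half_pos hKL
      _ = 2 := by norm_num
  have hKL' : (K : ℝ) * -(K * L)⁻¹ = -L⁻¹ := by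
    rw [mul_inv, mul_neg, ← mul_assoc, mul_inv_cancel₀ hK, one_mul]
  simpa only [hKL', ← sub_eq_add_neg] using one_add_mul_le_pow hle K

lemma inv_sqrt_le_two_div_log {x : ℝ} (hx : 1 < x) : (√x)⁻¹ ≤ 2 / Real.log x := by
  have hlog : Real.log x ≤ √x / (1 / 2) := by
    simpa [Real.sqrt_eq_rpow] using Real.log_le_rpow_div (by linarith) one_half_pos
  rw [inv_eq_one_div, div_le_div_iff₀ (by positivity) (Real.log_pos hx)]
  linarith

lemma log_sqrt_bounds {x : ℝ} (hx : 3 ≤ x) : 1 / 2 ≤ Real.log √x ∧ Real.log √x ≤ x := by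
  have hlog : 1 ≤ Real.log x := by
    rw [Real.le_log_iff_exp_le (by positivity)]
    linarith [Real.exp_one_lt_d9]
  rw [Real.log_sqrt (by positivity)]
  constructor <;> linarith [Real.log_le_sub_one_of_pos (x := x) (by positivity)]

lemma one_sub_four_div_log_le_pow_sub_pow {K : ℕ} (hK : 3 ≤ K) :
    1 - 4 / Real.log K ≤
      (1 - (K * Real.log √K)⁻¹) ^ K - (1 - Real.log √K / K) ^ K := by
  have hK3 : (3:ℝ) ≤ K := by exact_mod_cast hK
  obtain ⟨hL, hLK⟩ := log_sqrt_bounds hK3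
  have hL2 : Real.log √K = Real.log K / 2 := Real.log_sqrt (by positivity)
  have hlower : 1 - 2 / Real.log K ≤ (1 - (K * Real.log √K)⁻¹) ^ K := by
    convert one_sub_inv_le_one_sub_inv_mul_pow (K := K) (L := Real.log √K) (by nlinarith) using 2
    rw [hL2]; field_simp
  have hupper : (1 - Real.log √K / K) ^ K ≤ 2 / Real.log K :=
    calc (1 - Real.log √K / K) ^ K ≤ Real.exp (-Real.log √K) := Real.one_sub_div_pow_le_exp_neg hLK
      _ = (√K)⁻¹ := by rw [Real.exp_neg, Real.exp_log (by positivity)]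
      _ ≤ 2 / Real.log K := inv_sqrt_le_two_div_log (by linarith)
  have hsplit : 4 / Real.log K = 2 / Real.log K + 2 / Real.log K := by ring
  linarith

theorem stmt_10_general (nT : ℕ) (hnT : 2 ≤ nT) (B : ℝ)
    (F : ℝ → ℝ)
    (hF : ∀ x : ℝ, F x = if (2:ℝ) ^ (B / ((nT : ℝ) - 1)) - 1 ≤ x
      then 1 - (2:ℝ) ^ B * ((1 + x) ^ (nT - 1))⁻¹ else 0) :
    ∃ C > (0:ℝ), ∃ K₀ : ℕ, ∀ K : ℕ, K₀ ≤ K →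
      ∀ (Ω : Type) [MeasurableSpace Ω] (μ : Measure Ω) [IsProbabilityMeasure μ],
        ∀ X : Fin K → Ω → ℝ, (∀ i, Measurable (X i)) →
          iIndepFun X μ →
          (∀ i x, (μ {ω | X i ω ≤ x}).toReal = F x) →
          1 - ENNReal.ofReal (C / Real.log K) ≤
            μ {ω | ((2:ℝ) ^ B * K / Real.log (Real.sqrt K)) ^ (1 / ((nT : ℝ) - 1)) - 1
                      ≤ (⨆ i, X i ω) ∧
                   (⨆ i, X i ω)
                      ≤ ((2:ℝ) ^ B * K * Real.log (Real.sqrt K)) ^ (1 / ((nT : ℝ) - 1)) - 1} := by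
  obtain rfl : F = quantCellCDF nT B := funext hF
  refine ⟨4, four_pos, 3, fun K hK Ω _ μ _ X _ hX hXcdf => ?_⟩
  have : Nonempty (Fin K) := ⟨⟨0, by omega⟩⟩
  have hK3 : (3:ℝ) ≤ K := by exact_mod_cast hK
  obtain ⟨hL, hLK⟩ := log_sqrt_bounds hK3
  refine le_trans ?_ (measure_le_sub_measure_le_le _ _ _)
  rw [hX.measure_iSup_le_eq_ofReal_pow hXcdf, hX.measure_iSup_le_eq_ofReal_pow hXcdf,
    Fintype.card_fin, quantCellCDF_upper hnT B (by nlinarith),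
    quantCellCDF_lower hnT B (by linarith) hLK, ← ENNReal.ofReal_one,
    ← ENNReal.ofReal_sub _ (by positivity),
    ← ENNReal.ofReal_sub _ (pow_nonneg (sub_nonneg.2 ((div_le_one (by positivity)).2 hLK)) K)]
  exact ENNReal.ofReal_le_ofReal (one_sub_four_div_log_le_pow_sub_pow hK)

/-- First part of Lemma 9 (equation (46)): for i.i.d. random variables with c.d.f.
`F(x) = 1 - 2^B (1+x)^{-(nT-1)}` for `x ≥ 2^{B/(nT-1)} - 1` (and `0` otherwise), the
maximum `M_K` satisfies
`P((2^B K/log √K)^{1/(nT-1)} - 1 ≤ M_K ≤ (2^B K log √K)^{1/(nT-1)} - 1) ≥ 1 - O(1/log K)`. -/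
theorem stmt_10 (nT : ℕ) (hnT : 2 ≤ nT) (B : ℝ) (hB : 0 ≤ B)
    (F : ℝ → ℝ)
    (hF : ∀ x : ℝ, F x = if (2:ℝ) ^ (B / ((nT : ℝ) - 1)) - 1 ≤ x
      then 1 - (2:ℝ) ^ B * ((1 + x) ^ (nT - 1))⁻¹ else 0) :
    ∃ C > (0:ℝ), ∃ K₀ : ℕ, ∀ K : ℕ, K₀ ≤ K →
      ∀ (Ω : Type) [MeasurableSpace Ω] (μ : Measure Ω) [IsProbabilityMeasure μ],
        ∀ X : Fin K → Ω → ℝ, (∀ i, Measurable (X i)) →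
          iIndepFun X μ →
          (∀ i x, (μ {ω | X i ω ≤ x}).toReal = F x) →
          1 - ENNReal.ofReal (C / Real.log K) ≤
            μ {ω | ((2:ℝ) ^ B * K / Real.log (Real.sqrt K)) ^ (1 / ((nT : ℝ) - 1)) - 1
                      ≤ (⨆ i, X i ω) ∧
                   (⨆ i, X i ω)
                      ≤ ((2:ℝ) ^ B * K * Real.log (Real.sqrt K)) ^ (1 / ((nT : ℝ) - 1)) - 1} :=
  stmt_10_general nT hnT B F hF
end

section
/- Let n_T ≥ 2 be an integer and d > 0 real. Let F be the cumulative distribution function of a real random variable and suppose there exist constants C_0 > 0 and x_0 > 0 such that |1 − F(x) − d x^{−(n_T−1)}| ≤ C_0 x^{−n_T} for all x ≥ x_0. For each K ≥ 2 let X_1, …, X_K be i.i.d. with c.d.f. F and M_K = max_{1≤k≤K} X_k. Then there exist constants C > 0 and K_0 such that for all K ≥ K_0, P( (d K / log √K)^{1/(n_T−1)} ≤ M_K ≤ (d K log √K)^{1/(n_T−1)} ) ≥ 1 − C / log K. -/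
/-!
Write `m = n_T - 1` and `L = log √K`. Up to a relative error `O(1/x)`, the tail is
`1 - F x ≈ d / x ^ m`, so at the upper threshold `u = (d K L)^{1/m}` Bernoulli's inequality
gives `P(M_K > u) = 1 - F(u)^K ≤ K (1 - F u) ≲ 1 / L`, while at the lower threshold
`l = (d K / L)^{1/m}` independence and `p ≤ exp(p - 1)` give
`P(M_K ≤ l) = F(l)^K ≤ exp(-K (1 - F l)) ≤ exp(-L / 2) ≤ 2 / L`.
Both thresholds eventually exceed any fixed level because `K / L ≥ √K`.
-/

open MeasureTheory ProbabilityTheory Filter Real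

lemma pow_le_exp_neg_mul_one_sub {p : ℝ} (hp : 0 ≤ p) (n : ℕ) :
    p ^ n ≤ exp (-(n * (1 - p))) := by
  calc p ^ n ≤ exp (p - 1) ^ n := pow_le_pow_left₀ hp (by linarith [add_one_le_exp (p - 1)]) n
    _ = exp (-(n * (1 - p))) := by rw [← exp_nat_mul]; ring_nf

lemma one_sub_pow_le_mul_one_sub {p : ℝ} (hp : 0 ≤ p) (n : ℕ) :
    1 - p ^ n ≤ n * (1 - p) := by
  linarith [one_add_mul_sub_le_pow (by linarith : -1 ≤ p) n]

lemma exp_neg_le_inv {y : ℝ} (hy : 0 < y) : exp (-y) ≤ y⁻¹ := by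
  rw [exp_neg]; exact inv_anti₀ hy (by linarith [add_one_le_exp y])

lemma one_sub_le_of_abs_tail_le {p d C₀ x : ℝ} {m : ℕ} (hC₀ : 0 ≤ C₀) (hx : 1 ≤ x)
    (h : |1 - p - d / x ^ m| ≤ C₀ / x ^ (m + 1)) : 1 - p ≤ (d + C₀) / x ^ m := by
  have : C₀ / x ^ (m + 1) ≤ C₀ / x ^ m :=
    div_le_div_of_nonneg_left hC₀ (by positivity) (pow_le_pow_right₀ hx m.le_succ)
  rw [add_div]; linarith [(abs_le.1 h).2]

lemma div_le_one_sub_of_abs_tail_le {p d C₀ x : ℝ} {m : ℕ} (hx : 0 < x)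
    (hCx : 2 * C₀ ≤ d * x) (h : |1 - p - d / x ^ m| ≤ C₀ / x ^ (m + 1)) :
    d / (2 * x ^ m) ≤ 1 - p := by
  have hxm : 0 < x ^ m := by positivity
  have : C₀ / x ^ (m + 1) ≤ d / (2 * x ^ m) := by
    rw [div_le_div_iff₀ (by positivity) (by positivity), pow_succ]; nlinarith
  have : d / x ^ m = d / (2 * x ^ m) + d / (2 * x ^ m) := by field_simp; ring
  linarith [(abs_le.1 h).1]

lemma eventually_one_le_log_sqrt_and_le_div {d : ℝ} (hd : 0 < d) (c : ℝ) :
    ∀ᶠ K : ℕ in atTop, 1 ≤ log √(K : ℝ) ∧ c ≤ d * K / log √(K : ℝ) := by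
  have hsqrt : Tendsto (fun K : ℕ => √(K : ℝ)) atTop atTop :=
    tendsto_sqrt_atTop.comp tendsto_natCast_atTop_atTop
  filter_upwards [(tendsto_log_atTop.comp hsqrt).eventually_ge_atTop 1,
    hsqrt.eventually_ge_atTop (c / d)] with K hL hK
  rw [Function.comp_apply] at hL
  refine ⟨hL, ?_⟩
  have hs : 0 < √(K : ℝ) := by
    by_contra! h; simp [le_antisymm h (sqrt_nonneg _)] at hL; linarith
  calc c ≤ d * √(K : ℝ) := (div_le_iff₀' hd).1 hK
    _ = d * K / √(K : ℝ) := by rw [mul_div_assoc, div_sqrt]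
    _ ≤ d * K / log √(K : ℝ) :=
      div_le_div_of_nonneg_left (by positivity) (by linarith)
        ((log_le_sub_one_of_pos hs).trans (by linarith))

lemma pow_le_two_div_of_abs_tail_le {p d C₀ x L : ℝ} {m K : ℕ} (hp : 0 ≤ p) (hd : 0 < d)
    (hK : 0 < K) (hL : 0 < L) (hx : 0 < x) (hCx : 2 * C₀ ≤ d * x) (hxm : x ^ m = d * K / L)
    (h : |1 - p - d / x ^ m| ≤ C₀ / x ^ (m + 1)) : p ^ K ≤ 2 / L := by
  have hq : L / 2 ≤ K * (1 - p) := by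
    have hdx : d / (2 * x ^ m) = L / 2 / K := by rw [hxm]; field_simp
    exact (div_le_iff₀' (by positivity)).1 (hdx ▸ div_le_one_sub_of_abs_tail_le hx hCx h)
  calc p ^ K ≤ exp (-(K * (1 - p))) := pow_le_exp_neg_mul_one_sub hp K
    _ ≤ exp (-(L / 2)) := by gcongr
    _ ≤ 2 / L := by simpa using exp_neg_le_inv (half_pos hL)

lemma one_sub_pow_le_of_abs_tail_le {p d C₀ x L : ℝ} {m K : ℕ} (hp : 0 ≤ p) (hd : 0 < d)
    (hK : 0 < K) (hC₀ : 0 ≤ C₀) (hx : 1 ≤ x) (hxm : x ^ m = d * K * L)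
    (h : |1 - p - d / x ^ m| ≤ C₀ / x ^ (m + 1)) : 1 - p ^ K ≤ (d + C₀) / (d * L) :=
  calc 1 - p ^ K ≤ K * (1 - p) := one_sub_pow_le_mul_one_sub hp K
    _ ≤ K * ((d + C₀) / x ^ m) := by gcongr; exact one_sub_le_of_abs_tail_le hC₀ hx h
    _ = (d + C₀) / (d * L) := by rw [hxm]; field_simp

lemma le_rpow_inv_div_and_rpow_inv_div_le_rpow_inv_mul {R a L : ℝ} {m : ℕ} (hm : m ≠ 0)
    (ha : 0 ≤ a) (hL : 1 ≤ L) (hRa : R ^ m ≤ a / L) :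
    R ≤ (a / L) ^ (m⁻¹ : ℝ) ∧ (a / L) ^ (m⁻¹ : ℝ) ≤ (a * L) ^ (m⁻¹ : ℝ) :=
  ⟨le_of_pow_le_pow_left₀ hm (by positivity)
      (hRa.trans_eq (rpow_inv_natCast_pow (by positivity) hm).symm),
    rpow_le_rpow (by positivity)
      ((div_le_self ha hL).trans (le_mul_of_one_le_right ha hL)) (by positivity)⟩

section MaxOfIndependent

lemma setOf_ciSup_le_eq_iInter {Ω ι : Type*} [Finite ι] [Nonempty ι] (X : ι → Ω → ℝ)
    (x : ℝ) :
    {ω | ⨆ i, X i ω ≤ x} = ⋂ i, X i ⁻¹' Set.Iic x := by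
  ext ω
  simp [ciSup_le_iff (Set.finite_range _).bddAbove]

variable {Ω ι : Type*} [MeasurableSpace Ω] {μ : Measure Ω} [Fintype ι] [Nonempty ι]
  {X : ι → Ω → ℝ}

lemma ProbabilityTheory.iIndepFun.measure_ciSup_le (hind : iIndepFun X μ) (x : ℝ) :
    μ {ω | ⨆ i, X i ω ≤ x} = ∏ i, μ {ω | X i ω ≤ x} := by
  rw [setOf_ciSup_le_eq_iInter]
  exact hind.meas_iInter fun _ => ⟨Set.Iic x, measurableSet_Iic, rfl⟩

variable [IsProbabilityMeasure μ] {F : ℝ → ℝ}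

lemma ProbabilityTheory.iIndepFun.measure_ciSup_le_eq_ofReal_pow (hind : iIndepFun X μ)
    (hF : ∀ i x, (μ {ω | X i ω ≤ x}).toReal = F x) (x : ℝ) :
    μ {ω | ⨆ i, X i ω ≤ x} = ENNReal.ofReal (F x ^ Fintype.card ι) := by
  have hF' : ∀ i, μ {ω | X i ω ≤ x} = ENNReal.ofReal (F x) := fun i => by
    rw [← hF i x, ENNReal.ofReal_toReal (measure_ne_top μ _)]
  rw [hind.measure_ciSup_le, Finset.prod_congr rfl fun i _ => hF' i, Finset.prod_const,
    Finset.card_univ, ENNReal.ofReal_pow (hF (Classical.arbitrary ι) x ▸ ENNReal.toReal_nonneg)]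

lemma ProbabilityTheory.iIndepFun.one_sub_le_measure_ciSup_mem_Icc
    (hX : ∀ i, Measurable (X i)) (hind : iIndepFun X μ)
    (hF : ∀ i x, (μ {ω | X i ω ≤ x}).toReal = F x) (l u : ℝ) :
    1 - ENNReal.ofReal (F l ^ Fintype.card ι + (1 - F u ^ Fintype.card ι)) ≤
      μ {ω | l ≤ ⨆ i, X i ω ∧ ⨆ i, X i ω ≤ u} := by
  set n := Fintype.card ι
  have hF0 : ∀ x, 0 ≤ F x := fun x => hF (Classical.arbitrary ι) x ▸ ENNReal.toReal_nonneg
  have hM : Measurable fun ω => ⨆ i, X i ω := Measurable.iSup hX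
  have hFu : F u ^ n ≤ 1 := by
    rw [← hF (Classical.arbitrary ι) u]
    exact pow_le_one₀ ENNReal.toReal_nonneg measureReal_le_one
  have hbad : {ω | l ≤ ⨆ i, X i ω ∧ ⨆ i, X i ω ≤ u}ᶜ ⊆
      {ω | ⨆ i, X i ω ≤ l} ∪ {ω | ⨆ i, X i ω ≤ u}ᶜ := by
    intro ω hω
    simp only [Set.mem_compl_iff, Set.mem_ofPred_eq, not_and_or, not_le, Set.mem_union] at hω ⊢
    exact hω.imp le_of_lt id
  have hupper : μ {ω | ⨆ i, X i ω ≤ u}ᶜ = ENNReal.ofReal (1 - F u ^ n) := by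
    rw [prob_compl_eq_one_sub (measurableSet_le hM measurable_const),
      hind.measure_ciSup_le_eq_ofReal_pow hF, ENNReal.ofReal_sub _ (pow_nonneg (hF0 u) n),
      ENNReal.ofReal_one]
  have hG : MeasurableSet {ω | l ≤ ⨆ i, X i ω ∧ ⨆ i, X i ω ≤ u} :=
    (measurableSet_le measurable_const hM).inter (measurableSet_le hM measurable_const)
  rw [← compl_compl {ω | l ≤ ⨆ i, X i ω ∧ ⨆ i, X i ω ≤ u},
    prob_compl_eq_one_sub hG.compl]
  refine tsub_le_tsub_left ?_ 1
  calc μ {ω | l ≤ ⨆ i, X i ω ∧ ⨆ i, X i ω ≤ u}ᶜ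
      ≤ μ {ω | ⨆ i, X i ω ≤ l} + μ {ω | ⨆ i, X i ω ≤ u}ᶜ :=
        (measure_mono hbad).trans (measure_union_le _ _)
    _ = ENNReal.ofReal (F l ^ n + (1 - F u ^ n)) := by
      rw [hind.measure_ciSup_le_eq_ofReal_pow hF, hupper,
        ENNReal.ofReal_add (pow_nonneg (hF0 l) n) (by linarith)]

end MaxOfIndependent

theorem stmt_11_general (nT : ℕ) (hnT : 2 ≤ nT) (d : ℝ) (hd : 0 < d)
    (F : ℝ → ℝ)
    (C₀ x₀ : ℝ) (hC₀ : 0 < C₀)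
    (htail : ∀ x : ℝ, x₀ ≤ x →
      |1 - F x - d / x ^ (nT - 1)| ≤ C₀ / x ^ nT) :
    ∃ C > (0:ℝ), ∃ K₀ : ℕ, ∀ K : ℕ, K₀ ≤ K →
      ∀ (Ω : Type) [MeasurableSpace Ω] (μ : Measure Ω) [IsProbabilityMeasure μ],
        ∀ X : Fin K → Ω → ℝ, (∀ i, Measurable (X i)) →
          iIndepFun X μ →
          (∀ i x, (μ {ω | X i ω ≤ x}).toReal = F x) →
          1 - ENNReal.ofReal (C / Real.log K) ≤
            μ {ω | (d * K / Real.log (Real.sqrt K)) ^ (1 / ((nT : ℝ) - 1)) ≤ (⨆ i, X i ω) ∧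
                   (⨆ i, X i ω) ≤ (d * K * Real.log (Real.sqrt K)) ^ (1 / ((nT : ℝ) - 1))} := by
  obtain ⟨m, rfl⟩ : ∃ m, nT = m + 1 := ⟨nT - 1, by omega⟩
  have hm : m ≠ 0 := by omega
  simp only [Nat.add_sub_cancel, Nat.cast_add, Nat.cast_one, add_sub_cancel_right, one_div]
    at htail ⊢
  -- Above `R` the tail bound applies and its error term is at most half the main term.
  set R := max 1 (max x₀ (2 * C₀ / d))
  obtain ⟨K₀, hK₀⟩ := eventually_atTop.1 (eventually_one_le_log_sqrt_and_le_div hd (R ^ m))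
  refine ⟨4 + 2 * (d + C₀) / d, by positivity, K₀, fun K hK Ω _ μ _ X hX hind hF => ?_⟩
  obtain ⟨hL, hRK⟩ := hK₀ K hK
  set L := log √(K : ℝ)
  have hK : 0 < K := Nat.pos_of_ne_zero fun h => by simp [L, h] at hL; linarith
  have : Nonempty (Fin K) := ⟨⟨0, hK⟩⟩
  have hF0 : ∀ x, 0 ≤ F x := fun x => hF ⟨0, hK⟩ x ▸ ENNReal.toReal_nonneg
  have h1R : 1 ≤ R := le_max_left _ _
  have hx₀R : x₀ ≤ R := (le_max_left _ _).trans (le_max_right _ _)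
  have hCR : 2 * C₀ ≤ d * R :=
    (div_le_iff₀' hd).1 ((le_max_right _ _).trans (le_max_right _ _))
  obtain ⟨hRl, hlu⟩ := le_rpow_inv_div_and_rpow_inv_div_le_rpow_inv_mul hm
    (by positivity) hL hRK
  refine (tsub_le_tsub_left (ENNReal.ofReal_le_ofReal ?_) 1).trans
    (hind.one_sub_le_measure_ciSup_mem_Icc hX hF _ _)
  rw [Fintype.card_fin,
    show (4 + 2 * (d + C₀) / d) / log (K : ℝ) = 2 / L + (d + C₀) / (d * L) by
      simp only [L, log_sqrt K.cast_nonneg]; field_simp; ring]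
  exact add_le_add
    (pow_le_two_div_of_abs_tail_le (hF0 _) hd hK (by linarith) (by linarith)
      (hCR.trans (by gcongr)) (rpow_inv_natCast_pow (by positivity) hm) (htail _ (by linarith)))
    (one_sub_pow_le_of_abs_tail_le (hF0 _) hd hK hC₀.le (by linarith)
      (rpow_inv_natCast_pow (by positivity) hm) (htail _ (by linarith)))

/-- Second part of Lemma 9 (equation (47)) in its general form: for i.i.d. random
variables whose common c.d.f. satisfies `1 - F(x) = d x^{-(nT-1)} + O(x^{-nT})`, the
maximum `M_K` satisfies
`P((dK/log √K)^{1/(nT-1)} ≤ M_K ≤ (dK log √K)^{1/(nT-1)}) ≥ 1 - O(1/log K)`. -/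
theorem stmt_11 (nT : ℕ) (hnT : 2 ≤ nT) (d : ℝ) (hd : 0 < d)
    (F : ℝ → ℝ)
    (hcdf : ∃ ν : Measure ℝ, IsProbabilityMeasure ν ∧ ∀ x, (ν (Set.Iic x)).toReal = F x)
    (C₀ x₀ : ℝ) (hC₀ : 0 < C₀) (hx₀ : 0 < x₀)
    (htail : ∀ x : ℝ, x₀ ≤ x →
      |1 - F x - d / x ^ (nT - 1)| ≤ C₀ / x ^ nT) :
    ∃ C > (0:ℝ), ∃ K₀ : ℕ, ∀ K : ℕ, K₀ ≤ K →
      ∀ (Ω : Type) [MeasurableSpace Ω] (μ : Measure Ω) [IsProbabilityMeasure μ],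
        ∀ X : Fin K → Ω → ℝ, (∀ i, Measurable (X i)) →
          iIndepFun X μ →
          (∀ i x, (μ {ω | X i ω ≤ x}).toReal = F x) →
          1 - ENNReal.ofReal (C / Real.log K) ≤
            μ {ω | (d * K / Real.log (Real.sqrt K)) ^ (1 / ((nT : ℝ) - 1)) ≤ (⨆ i, X i ω) ∧
                   (⨆ i, X i ω) ≤ (d * K * Real.log (Real.sqrt K)) ^ (1 / ((nT : ℝ) - 1))} :=
  stmt_11_general nT hnT d hd F C₀ x₀ hC₀ htail
end
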